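/- Let (w_ε) be an S-moderate net of Schwartz functions on ℝ^d. Then for all n, m ∈ ℕ there exists N ∈ ℕ such that sup over {ξ ∈ ℝ^d : |ξ| ≥ ε^{−N}} of ⟨ξ⟩^m |w_ε(ξ)| ≤ ε^n for small ε. -/

import Mathlib

open MeasureTheory Set Metric
open scoped RealInnerProductSpace

noncomputable section

/-- Euclidean space `ℝ^d`. -/
abbrev Eu (d : ℕ) : Type := EuclideanSpace ℝ (Fin d)

/-- A property of `ε` holds "for small ε", i.e. on some interval `(0, ε₀]`. -/
def SmallE (P : ℝ → Prop) : Prop :=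
  ∃ ε₀ : ℝ, 0 < ε₀ ∧ ∀ ε : ℝ, 0 < ε → ε ≤ ε₀ → P ε

/-- A net in a normed space is moderate. -/
def ModNet {V : Type*} [NormedAddCommGroup V] (x : ℝ → V) : Prop :=
  ∃ N : ℕ, SmallE fun ε => ‖x ε‖ ≤ ε ^ (-(N : ℝ))

/-- A net in a normed space is negligible. -/
def NegNet {V : Type*} [NormedAddCommGroup V] (x : ℝ → V) : Prop :=
  ∀ m : ℕ, SmallE fun ε => ‖x ε‖ ≤ ε ^ (m : ℝ)

/-- A fast scale infinitesimal net. -/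
def FastInf {V : Type*} [NormedAddCommGroup V] (x : ℝ → V) : Prop :=
  ∃ a : ℝ, 0 < a ∧ SmallE fun ε => ‖x ε‖ ≤ ε ^ a

/-- A slow scale infinitesimal net of positive reals. -/
def SlowInfPos (r : ℝ → ℝ) : Prop :=
  (∀ ε : ℝ, 0 < ε → ε ≤ 1 → 0 < r ε) ∧
    ∀ a : ℝ, 0 < a → SmallE fun ε => ε ^ a ≤ r ε ∧ r ε ≤ a

/-- A fast scale net. -/
def FastScale {V : Type*} [NormedAddCommGroup V] (x : ℝ → V) : Prop :=
  ∃ a : ℝ, 0 < a ∧ SmallE fun ε => ε ^ (-a) ≤ ‖x ε‖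

/-- A slow scale net. -/
def SlowScale {V : Type*} [NormedAddCommGroup V] (x : ℝ → V) : Prop :=
  ∀ a : ℝ, 0 < a → SmallE fun ε => ‖x ε‖ ≤ ε ^ (-a)

/-- A slow scale net of positive reals. -/
def SlowScalePos (R : ℝ → ℝ) : Prop :=
  (∀ ε : ℝ, 0 < ε → ε ≤ 1 → 0 < R ε) ∧
    ∀ a : ℝ, 0 < a → SmallE fun ε => R ε ≤ ε ^ (-a)

/-- First order partial derivative in the `i`-th coordinate direction. -/
def pd {d : ℕ} {F : Type*} [NormedAddCommGroup F] [NormedSpace ℝ F]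
    (i : Fin d) (f : Eu d → F) : Eu d → F :=
  fun x => fderiv ℝ f x (EuclideanSpace.single i 1)

/-- Iterated partial derivative `∂^α` along a list of coordinate directions
(a multi-index `α`). -/
def pdL {d : ℕ} {F : Type*} [NormedAddCommGroup F] [NormedSpace ℝ F]
    (L : List (Fin d)) (f : Eu d → F) : Eu d → F :=
  L.foldr pd f

/-- A moderate net of smooth functions on an open set `Ω`. -/
def SmoothModNetOn {d : ℕ} (Ω : Set (Eu d)) (u : ℝ → Eu d → ℂ) : Prop :=
  (∀ ε : ℝ, 0 < ε → ε ≤ 1 → ContDiffOn ℝ (⊤ : ℕ∞) (u ε) Ω) ∧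
    ∀ K : Set (Eu d), IsCompact K → K ⊆ Ω → ∀ L : List (Fin d), ∃ N : ℕ,
      SmallE fun ε => ∀ x ∈ K, ‖pdL L (u ε) x‖ ≤ ε ^ (-(N : ℝ))

/-- A moderate net of smooth functions with supports all contained in one
common compact subset of `Ω`. -/
def CptModNet {d : ℕ} (Ω : Set (Eu d)) (v : ℝ → Eu d → ℂ) : Prop :=
  (∀ ε : ℝ, 0 < ε → ε ≤ 1 → ContDiff ℝ (⊤ : ℕ∞) (v ε)) ∧
  (∃ K : Set (Eu d), IsCompact K ∧ K ⊆ Ω ∧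
    ∀ ε : ℝ, 0 < ε → ε ≤ 1 → tsupport (v ε) ⊆ K) ∧
  (∀ L : List (Fin d), ∃ N : ℕ, SmallE fun ε =>
    ∀ x : Eu d, ‖pdL L (v ε) x‖ ≤ ε ^ (-(N : ℝ)))

/-- The Fourier transform `∫ e^{-i x·ξ} w(x) dx`. -/
def FT {d : ℕ} (w : Eu d → ℂ) (ξ : Eu d) : ℂ :=
  ∫ x : Eu d, Complex.exp (-(Complex.I * ((⟪x, ξ⟫ : ℝ) : ℂ))) * w x

/-- The net `(u_ε)` is microlocally regular at the generalized point `(x₀, ξ₀)`. -/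
def MicroReg {d : ℕ} (Ω : Set (Eu d)) (u : ℝ → Eu d → ℂ) (x₀ ξ₀ : ℝ → Eu d) : Prop :=
  ∃ v : ℝ → Eu d → ℂ, CptModNet Ω v ∧
    (∀ m : ℕ, 1 ≤ m → SmallE fun ε => ∀ x : Eu d,
      ‖x - x₀ ε‖ ≤ ε ^ (1 / (m : ℝ)) → ‖u ε x - v ε x‖ ≤ ε ^ (m : ℝ)) ∧
    (∀ m : ℕ, 1 ≤ m → SmallE fun ε => ∀ ξ : Eu d,
      ε ^ (-(1 / (m : ℝ))) ≤ ‖ξ‖ → ‖‖ξ‖⁻¹ • ξ - ξ₀ ε‖ ≤ ε ^ (1 / (m : ℝ)) →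
        ‖FT (v ε) ξ‖ ≤ ε ^ (m : ℝ))

/-- The "japanese bracket" `⟨ξ⟩ = (1+|ξ|²)^{1/2}`. -/
def jap {d : ℕ} (ξ : Eu d) : ℝ := Real.sqrt (1 + ‖ξ‖ ^ 2)

/-- An S-moderate net of Schwartz functions. -/
def SModNet {d : ℕ} (v : ℝ → SchwartzMap (Eu d) ℂ) : Prop :=
  ∀ (L : List (Fin d)) (β : Fin d → ℕ), ∃ N : ℕ, SmallE fun ε =>
    ∀ x : Eu d, |∏ j, (x j) ^ (β j)| * ‖pdL L (⇑(v ε)) x‖ ≤ ε ^ (-(N : ℝ))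


/-!
Testing the S-moderate bounds on the monomials `x_i ^ (m+1)` gives `|ξ|^(m+1) |w_ε(ξ)| ≤ C ε^(-N)`
for all `ξ`. On `|ξ| ≥ ε^(-(N+n+1))` one power of `|ξ|` then pays for `ε^(-N)` with `ε^(n+1)` to
spare, while the remaining `|ξ|^m` dominates `⟨ξ⟩^m` up to the factor `2^m`.
-/

open Filter Topology

theorem smallE_iff_eventually {P : ℝ → Prop} : SmallE P ↔ ∀ᶠ ε in 𝓝[>] 0, P ε := by
  rw [Filter.Eventually, mem_nhdsGT_iff_exists_Ioc_subset]
  constructor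
  · rintro ⟨ε₀, hε₀, hP⟩
    exact ⟨ε₀, hε₀, fun ε hε => hP ε hε.1 hε.2⟩
  · rintro ⟨ε₀, hε₀, hP⟩
    exact ⟨ε₀, hε₀, fun ε hε hle => hP ⟨hε, hle⟩⟩

section EuclideanNorm

variable {ι : Type*} [Fintype ι]

theorem euclidean_norm_le_sum_abs (x : EuclideanSpace ℝ ι) : ‖x‖ ≤ ∑ i, |x i| := by
  rw [EuclideanSpace.norm_eq, Real.sqrt_le_iff]
  refine ⟨by positivity, ?_⟩
  simpa only [Real.norm_eq_abs] using
    Finset.sum_sq_le_sq_sum_of_nonneg fun i _ => abs_nonneg (x i)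

theorem euclidean_norm_pow_succ_le (x : EuclideanSpace ℝ ι) (k : ℕ) :
    ‖x‖ ^ (k + 1) ≤ (Fintype.card ι : ℝ) ^ k * ∑ i, |x i| ^ (k + 1) :=
  calc ‖x‖ ^ (k + 1) ≤ (∑ i, |x i|) ^ (k + 1) := by
        gcongr; exact euclidean_norm_le_sum_abs x
    _ ≤ _ := pow_sum_le_card_mul_sum_pow (fun i _ => abs_nonneg (x i)) k

theorem euclidean_norm_pow_succ_mul_le {x : EuclideanSpace ℝ ι} {k : ℕ} {a C : ℝ} (ha : 0 ≤ a)
    (h : ∀ i, |x i| ^ (k + 1) * a ≤ C) :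
    ‖x‖ ^ (k + 1) * a ≤ (Fintype.card ι : ℝ) ^ (k + 1) * C :=
  calc ‖x‖ ^ (k + 1) * a ≤ (Fintype.card ι : ℝ) ^ k * ∑ i, |x i| ^ (k + 1) * a := by
        rw [← Finset.sum_mul, ← mul_assoc]
        gcongr
        exact euclidean_norm_pow_succ_le x k
    _ ≤ (Fintype.card ι : ℝ) ^ k * ∑ _i : ι, C := by gcongr with i; exact h i
    _ = (Fintype.card ι : ℝ) ^ (k + 1) * C := by
        rw [Finset.sum_const, Finset.card_univ, nsmul_eq_mul]; ring

end EuclideanNorm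

theorem jap_le_two_mul_norm {d : ℕ} {ξ : Eu d} (hξ : 1 ≤ ‖ξ‖) : jap ξ ≤ 2 * ‖ξ‖ := by
  rw [jap, Real.sqrt_le_iff]
  constructor <;> nlinarith

theorem jap_pow_mul_le_of_norm_pow_succ_mul_le {d m : ℕ} {ξ : Eu d} {a K : ℝ}
    (hξ : 1 ≤ ‖ξ‖) (ha : 0 ≤ a) (h : ‖ξ‖ ^ (m + 1) * a ≤ K) :
    jap ξ ^ m * a ≤ 2 ^ m * K / ‖ξ‖ :=
  calc jap ξ ^ m * a ≤ (2 * ‖ξ‖) ^ m * a := by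
        gcongr
        exacts [Real.sqrt_nonneg _, jap_le_two_mul_norm hξ]
    _ = 2 ^ m * (‖ξ‖ ^ (m + 1) * a) / ‖ξ‖ := by
        field_simp
        ring
    _ ≤ 2 ^ m * K / ‖ξ‖ := by gcongr

theorem SModNet.exists_norm_pow_succ_mul_le {d : ℕ} {w : ℝ → SchwartzMap (Eu d) ℂ}
    (hw : SModNet w) (k : ℕ) :
    ∃ N : ℕ, ∀ᶠ ε in 𝓝[>] 0, ∀ ξ : Eu d,
      ‖ξ‖ ^ (k + 1) * ‖w ε ξ‖ ≤ (d : ℝ) ^ (k + 1) * ε ^ (-(N : ℝ)) := by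
  choose N hN using fun i : Fin d => hw [] (Pi.single i (k + 1))
  refine ⟨Finset.univ.sup N, ?_⟩
  have hcoord := eventually_all.2 fun i => smallE_iff_eventually.1 (hN i)
  filter_upwards [hcoord, Ioc_mem_nhdsGT one_pos] with ε hε ⟨hε0, hε1⟩ ξ
  simpa only [Fintype.card_fin] using euclidean_norm_pow_succ_mul_le (norm_nonneg _) fun i =>
    calc |ξ i| ^ (k + 1) * ‖w ε ξ‖
        = |∏ j, ξ j ^ (Pi.single i (k + 1) : Fin d → ℕ) j| * ‖pdL [] (⇑(w ε)) ξ‖ := by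
          simp only [Pi.single_apply, pow_ite, pow_zero, Finset.prod_ite_eq', Finset.mem_univ,
            if_true, abs_pow]
          rfl
      _ ≤ ε ^ (-(N i : ℝ)) := hε i ξ
      _ ≤ ε ^ (-((Finset.univ.sup N : ℕ) : ℝ)) := by
          refine Real.rpow_le_rpow_of_exponent_ge hε0 hε1 (neg_le_neg ?_)
          exact_mod_cast Finset.le_sup (Finset.mem_univ i)

/-- an S-moderate net of Schwartz functions decays rapidly, with all
seminorm losses moderate, beyond a suitable radius `ε^{-N}`. -/
theorem stmt2 {d : ℕ} (w : ℝ → SchwartzMap (Eu d) ℂ) (hw : SModNet w) :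
    ∀ n m : ℕ, ∃ N : ℕ, SmallE fun ε => ∀ ξ : Eu d,
      ε ^ (-(N : ℝ)) ≤ ‖ξ‖ → jap ξ ^ m * ‖w ε ξ‖ ≤ ε ^ (n : ℝ) := by
  intro n m
  obtain ⟨N, hN⟩ := hw.exists_norm_pow_succ_mul_le m
  set C : ℝ := 2 ^ m * (d : ℝ) ^ (m + 1)
  refine ⟨N + n + 1, smallE_iff_eventually.2 ?_⟩
  filter_upwards [hN, Ioc_mem_nhdsGT (show (0 : ℝ) < min 1 (C + 1)⁻¹ by positivity)]
    with ε hbound ⟨hε, hεmin⟩ ξ hξ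
  have hξ1 : 1 ≤ ‖ξ‖ := le_trans (Real.one_le_rpow_of_pos_of_le_one_of_nonpos hε
    (hεmin.trans (min_le_left _ _)) (neg_nonpos.2 (Nat.cast_nonneg _))) hξ
  have hCε : C * ε ≤ 1 := by
    have := hεmin.trans (min_le_right _ _)
    rw [inv_eq_one_div, le_div_iff₀ (by positivity)] at this
    nlinarith
  calc jap ξ ^ m * ‖w ε ξ‖
        ≤ 2 ^ m * ((d : ℝ) ^ (m + 1) * ε ^ (-(N : ℝ))) / ‖ξ‖ :=
          jap_pow_mul_le_of_norm_pow_succ_mul_le hξ1 (norm_nonneg _) (hbound ξ)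
    _ ≤ 2 ^ m * ((d : ℝ) ^ (m + 1) * ε ^ (-(N : ℝ))) / ε ^ (-((N + n + 1 : ℕ) : ℝ)) := by
        gcongr
    _ = C * ε * ε ^ (n : ℝ) := by
        have hexp : -(N : ℝ) - -((N + n + 1 : ℕ) : ℝ) = 1 + n := by push_cast; ring
        simp only [mul_div_assoc, ← Real.rpow_sub hε, hexp, Real.rpow_add hε, Real.rpow_one]
        ring
    _ ≤ ε ^ (n : ℝ) := by
        have := Real.rpow_nonneg hε.le (n : ℝ)
        nlinarith
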